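/- Let μ ≡ 0 and let λ : ℕ → ℂ be given by λ(n) = √n if n is odd and λ(n) = 0 if n is even. Then F⁰₁ is not relatively bounded with respect to F⁰₀: there do not exist constants a, b ≥ 0 such that ‖F⁰₁ u‖ ≤ a‖u‖ + b‖F⁰₀ u‖ for all finitely supported u ∈ ℓ²(ℕ). Indeed, for every m ≥ 0, ‖F⁰₁ e_{2m+1}‖ = √(2m+1) while F⁰₀ e_{2m+1} = 0. -/

import Mathlib

/-- The coefficient `F⁰₀ = -½|λ|²(N+1) + iμ(N)` of the inverse harmonic oscillator model,
acting pointwise on sequences. -/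
noncomputable def ihoF00 (lam : ℕ → ℂ) (mu : ℕ → ℝ) (u : ℕ → ℂ) : ℕ → ℂ :=
  fun n => (-(1 / 2 : ℂ) * (‖lam (n + 1)‖ : ℂ) ^ 2 + Complex.I * (mu n : ℂ)) * u n

/-- The coefficient `F⁰₁ = W*λ̄(N)`: `F⁰₁ e_n = conj(λ(n)) e_{n-1}`, `F⁰₁ e₀ = 0`. -/
noncomputable def ihoF01 (lam : ℕ → ℂ) (u : ℕ → ℂ) : ℕ → ℂ :=
  fun n => (starRingEnd ℂ) (lam (n + 1)) * u (n + 1)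

/-- The choice `λ(n) = √n` for odd `n`, `λ(n) = 0` for even `n`. -/
noncomputable def oddSqrt : ℕ → ℂ := fun n => if Odd n then ((Real.sqrt n : ℝ) : ℂ) else 0

/-- The standard basis vector `e_k` of `ℓ²(ℕ)`. -/
def stdBasis (k : ℕ) : ℕ → ℂ := fun n => if n = k then 1 else 0

/-- With `μ ≡ 0` and `λ(n) = √n` for odd `n`, `λ(n) = 0` for even `n`, the
operator `F⁰₁` is not relatively bounded with respect to `F⁰₀`: no constants `a, b ≥ 0`
satisfy `‖F⁰₁ u‖ ≤ a‖u‖ + b‖F⁰₀ u‖` for all finitely supported `u`.  Indeed, for every `m`,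
`‖F⁰₁ e_{2m+1}‖ = √(2m+1)` while `F⁰₀ e_{2m+1} = 0`. -/
lemma aux_F00_zero (m : ℕ) : ihoF00 oddSqrt (fun _ => 0) (stdBasis (2 * m + 1)) = 0 := by
  funext n
  simp only [ihoF00, oddSqrt, stdBasis, Complex.ofReal_zero, mul_zero, add_zero]
  rcases eq_or_ne n (2 * m + 1) with h | h
  · subst h
    have : ¬ Odd (2 * m + 1 + 1) := by simp [Nat.odd_add_one, parity_simps]
    simp [this]
  · simp [h]

lemma aux_F01_tsum (m : ℕ) :
    (∑' n, ‖ihoF01 oddSqrt (stdBasis (2 * m + 1)) n‖ ^ 2) = 2 * m + 1 := by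
  have hodd : Odd (2 * m + 1) := odd_two_mul_add_one m
  rw [tsum_eq_single (2 * m)]
  · simp only [ihoF01, oddSqrt, stdBasis, hodd, if_pos, if_pos rfl, mul_one]
    rw [Complex.norm_conj, Complex.norm_real, Real.norm_eq_abs,
      abs_of_nonneg (Real.sqrt_nonneg _), Real.sq_sqrt (by positivity)]
    push_cast; ring
  · intro n hn
    have : n + 1 ≠ 2 * m + 1 := by omega
    simp [ihoF01, stdBasis, this, hn]

lemma aux_norm_tsum (k : ℕ) : (∑' n, ‖stdBasis k n‖ ^ 2) = 1 := by
  rw [tsum_eq_single k]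
  · simp [stdBasis]
  · intro n hn; simp [stdBasis, hn]

theorem iho_not_relatively_bounded :
    (¬ ∃ a b : ℝ, 0 ≤ a ∧ 0 ≤ b ∧ ∀ (u : ℕ → ℂ), (Function.support u).Finite →
        Real.sqrt (∑' n, ‖ihoF01 oddSqrt u n‖ ^ 2)
          ≤ a * Real.sqrt (∑' n, ‖u n‖ ^ 2)
            + b * Real.sqrt (∑' n, ‖ihoF00 oddSqrt (fun _ => 0) u n‖ ^ 2)) ∧
    ∀ m : ℕ,
      Real.sqrt (∑' n, ‖ihoF01 oddSqrt (stdBasis (2 * m + 1)) n‖ ^ 2)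
          = Real.sqrt (2 * m + 1) ∧
        ihoF00 oddSqrt (fun _ => 0) (stdBasis (2 * m + 1)) = 0 := by
  constructor
  · rintro ⟨a, b, ha, hb, h⟩
    obtain ⟨m, hm⟩ : ∃ m : ℕ, a ^ 2 < 2 * m + 1 :=
      ⟨⌈a ^ 2⌉₊, lt_of_le_of_lt (Nat.le_ceil _)
        (by have : (0:ℝ) ≤ (⌈a ^ 2⌉₊ : ℝ) := Nat.cast_nonneg _; linarith)⟩
    have hsupp : (Function.support (stdBasis (2 * m + 1))).Finite := by
      apply Set.Finite.subset (Set.finite_singleton (2 * m + 1))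
      intro n hn
      simp only [Function.mem_support, stdBasis, ne_eq, ite_eq_right_iff, not_forall] at hn
      exact hn.1
    have h1 := h _ hsupp
    rw [aux_F01_tsum, aux_norm_tsum, aux_F00_zero] at h1
    simp only [Pi.zero_apply, map_zero, ne_eq, OfNat.ofNat_ne_zero, not_false_eq_true,
      norm_zero, zero_pow, tsum_zero, Real.sqrt_zero, Real.sqrt_one, mul_one, mul_zero, add_zero] at h1
    nlinarith [Real.sq_sqrt (by positivity : (0:ℝ) ≤ 2 * (m:ℝ) + 1),
      Real.sqrt_nonneg (2 * (m:ℝ) + 1)]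
  · intro m
    refine ⟨?_, aux_F00_zero m⟩
    rw [aux_F01_tsum]
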